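/- arXiv:1911.08917 — 7 statements merged into one kernel-verified Lean document; each statement's English description precedes it below -/
import Mathlib

section
/- The Malmquist–Takenaka functions satisfy the differentiation recurrence φ_n'(x) = −n·φ_{n−1}(x) + (2n+1)·i·φ_n(x) + (n+1)·φ_{n+1}(x) for all n ∈ ℤ and x ∈ ℝ. -/
/-!
With `u = 1 + 2ix` and `v = 1 - 2ix`, the logarithmic derivative of `φ_n = c iⁿ uⁿ / vⁿ⁺¹` is
`2i (n/u + (n+1)/v)`, while `φ_{n±1} = (iu/v)^{±1} φ_n`. Dividing the recurrence by `φ_n`, it becomes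
`2i (n/u + (n+1)/v) = i (n v/u + (2n+1) + (n+1) u/v)`, which holds because `u + v = 2`.
-/

open Complex

noncomputable def MT (n : ℤ) (x : ℝ) : ℂ :=
  (Real.sqrt (2 / Real.pi) : ℂ) * I ^ n * (1 + 2 * I * x) ^ n / (1 - 2 * I * x) ^ (n + 1)

theorem HasDerivAt.zpow_of_ne_zero {𝕜 𝕜' : Type*} [NontriviallyNormedField 𝕜]
    [NontriviallyNormedField 𝕜'] [NormedAlgebra 𝕜 𝕜'] {f : 𝕜 → 𝕜'} {f' : 𝕜'} {x : 𝕜}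
    (m : ℤ) (hf : HasDerivAt f f' x) (hx : f x ≠ 0) :
    HasDerivAt (fun y => f y ^ m) (m * f x ^ (m - 1) * f') x :=
  (hasDerivAt_zpow m _ (Or.inl hx)).comp x hf

theorem one_add_two_I_mul_ofReal_ne_zero (x : ℝ) : (1 + 2 * I * x : ℂ) ≠ 0 := fun h => by
  simpa using congrArg re h

theorem one_sub_two_I_mul_ofReal_ne_zero (x : ℝ) : (1 - 2 * I * x : ℂ) ≠ 0 := fun h => by
  simpa using congrArg re h

theorem MT_add_one (n : ℤ) (x : ℝ) :
    MT (n + 1) x = I * (1 + 2 * I * x) / (1 - 2 * I * x) * MT n x := by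
  have hu := one_add_two_I_mul_ofReal_ne_zero x
  have hv := one_sub_two_I_mul_ofReal_ne_zero x
  simp only [MT, zpow_add_one₀ hu, zpow_add_one₀ hv, zpow_add_one₀ I_ne_zero]
  field_simp

theorem MT_hasDerivAt_logDeriv (n : ℤ) (x : ℝ) :
    HasDerivAt (MT n)
      (2 * I * (n / (1 + 2 * I * x) + (n + 1) / (1 - 2 * I * x)) * MT n x) x := by
  have hu := one_add_two_I_mul_ofReal_ne_zero x
  have hv := one_sub_two_I_mul_ofReal_ne_zero x
  have hy : HasDerivAt (fun y : ℝ => (y : ℂ)) 1 x := (hasDerivAt_id x).ofReal_comp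
  have hU := ((hy.const_mul (2 * I)).const_add 1).zpow_of_ne_zero n hu
  have hV := ((hy.const_mul (2 * I)).const_sub 1).zpow_of_ne_zero (n + 1) hv
  refine ((hU.const_mul ((Real.sqrt (2 / Real.pi) : ℂ) * I ^ n)).div hV
    (zpow_ne_zero _ hv)).congr_deriv ?_
  simp only [MT, add_sub_cancel_right, Int.cast_add, Int.cast_one, zpow_sub_one₀ hu,
    zpow_add_one₀ hv]
  field_simp
  ring

theorem MT_hasDerivAt (n : ℤ) (x : ℝ) :
    HasDerivAt (MT n)
      (-(n : ℂ) * MT (n - 1) x + (2 * n + 1) * I * MT n x + (n + 1) * MT (n + 1) x) x := by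
  have hu := one_add_two_I_mul_ofReal_ne_zero x
  have hv := one_sub_two_I_mul_ofReal_ne_zero x
  have hprev : MT (n - 1) x = (1 - 2 * I * x) / (I * (1 + 2 * I * x)) * MT n x := by
    rw [← sub_add_cancel n 1, MT_add_one, add_sub_cancel_right]
    field_simp
  refine (MT_hasDerivAt_logDeriv n x).congr_deriv ?_
  rw [hprev, MT_add_one]
  field_simp
  rw [I_sq]
  ring
end

section
/- Let N ≥ 1, let θ_k (k = 1,…,2N) be equispaced points in the periodic interval [−π, π] with spacing π/N, and set x_k = (1/2)·tan(θ_k/2). Then the truncated Malmquist–Takenaka system {φ_n}_{n=−N}^{N−1} is orthonormal with respect to the discrete inner product ⟨f, g⟩_N = (π/(4N))·Σ_{k=1}^{2N} f(x_k)·conj(g(x_k))·(1+4x_k²): that is, ⟨φ_ℓ, φ_m⟩_N = δ_{ℓ,m} for all −N ≤ ℓ, m ≤ N−1. -/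
open Complex

/-- Equispaced angles `θ_k = -π + (k - 1/2)π/N` for `k = 1,…,2N`, here indexed `k = 0,…,2N-1`. -/
noncomputable def θpt (N : ℕ) (k : ℕ) : ℝ :=
  -Real.pi + ((k : ℝ) + 1 / 2) * Real.pi / N

noncomputable def xpt (N : ℕ) (k : ℕ) : ℝ := Real.tan (θpt N k / 2) / 2

/-! The Cayley transform `w(x) = (1 + 2ix)/(1 - 2ix)` is unimodular and
`φₙ(x) = √(2/π) (i w(x))ⁿ / (1 - 2ix)`, so `φₗ(x) conj(φₘ(x)) (1 + 4x²) = (2/π) (i w(x))^(l-m)`.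
At `x = tan(θ/2)/2` one has `w(x) = e^{iθ}`, so on the nodes `i w(x_k) = c ζᵏ` with `ζ` a primitive
`2N`-th root of unity, and the discrete inner product is a geometric sum in `ζ^(l-m)`, which vanishes
because `0 < |l - m| < 2N`. -/

theorem IsPrimitiveRoot.sum_pow_zpow {K : Type*} [Field K] {ζ : K} {n : ℕ}
    (hζ : IsPrimitiveRoot ζ n) (d : ℤ) :
    ∑ k ∈ Finset.range n, (ζ ^ k) ^ d = if (n : ℤ) ∣ d then (n : K) else 0 := by
  simp_rw [← zpow_natCast, ← zpow_mul, mul_comm _ d, zpow_mul, zpow_natCast]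
  split_ifs with hd
  · simp [(hζ.zpow_eq_one_iff_dvd d).mpr hd]
  · rw [geom_sum_eq (mt (hζ.zpow_eq_one_iff_dvd d).mp hd), ← zpow_natCast, ← zpow_mul,
      mul_comm, zpow_mul, zpow_natCast, hζ.pow_eq_one, one_zpow, sub_self, zero_div]

noncomputable def cayley (x : ℝ) : ℂ := (1 + 2 * I * x) / (1 - 2 * I * x)

lemma one_sub_two_I_mul_ne_zero (x : ℝ) : 1 - 2 * I * x ≠ 0 := by
  intro h
  simpa using congrArg re h

lemma one_add_two_I_mul_ne_zero (x : ℝ) : 1 + 2 * I * x ≠ 0 := by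
  intro h
  simpa using congrArg re h

lemma conj_I_mul_cayley (x : ℝ) : starRingEnd ℂ (I * cayley x) = (I * cayley x)⁻¹ := by
  rw [map_mul, conj_I, mul_inv, inv_I, cayley, map_div₀, inv_div]
  simp only [map_add, map_sub, map_mul, map_one, map_ofNat, conj_I, conj_ofReal]
  ring

lemma I_mul_cayley_ne_zero (x : ℝ) : I * cayley x ≠ 0 :=
  mul_ne_zero I_ne_zero (div_ne_zero (one_add_two_I_mul_ne_zero x) (one_sub_two_I_mul_ne_zero x))

lemma mul_conj_one_sub_two_I_mul (x : ℝ) :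
    (1 - 2 * I * x) * starRingEnd ℂ (1 - 2 * I * x) = ((1 + 4 * x ^ 2 : ℝ) : ℂ) := by
  simp only [map_sub, map_mul, map_one, map_ofNat, conj_I, conj_ofReal]
  push_cast
  linear_combination (-4 * (x : ℂ) ^ 2) * I_sq

lemma MT_eq_zpow_div (n : ℤ) (x : ℝ) :
    MT n x = (Real.sqrt (2 / Real.pi) : ℂ) * (I * cayley x) ^ n / (1 - 2 * I * x) := by
  have h := one_sub_two_I_mul_ne_zero x
  rw [MT, cayley, mul_zpow, div_zpow, zpow_add₀ h, zpow_one]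
  field_simp

lemma MT_mul_conj_MT (l m : ℤ) (x : ℝ) :
    MT l x * starRingEnd ℂ (MT m x) * ((1 + 4 * x ^ 2 : ℝ) : ℂ)
      = ((2 / Real.pi : ℝ) : ℂ) * (I * cayley x) ^ (l - m) := by
  have hsqrt : (Real.sqrt (2 / Real.pi) : ℂ) * (Real.sqrt (2 / Real.pi) : ℂ)
      = ((2 / Real.pi : ℝ) : ℂ) := by
    rw [← ofReal_mul, Real.mul_self_sqrt (by positivity)]
  have h := one_sub_two_I_mul_ne_zero x
  have h' : starRingEnd ℂ (1 - 2 * I * x) ≠ 0 := (map_ne_zero _).mpr h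
  have hm : (I * cayley x) ^ m ≠ 0 := zpow_ne_zero m (I_mul_cayley_ne_zero x)
  rw [MT_eq_zpow_div, MT_eq_zpow_div, map_div₀, map_mul, map_zpow₀, conj_I_mul_cayley, conj_ofReal,
    inv_zpow, ← mul_conj_one_sub_two_I_mul, zpow_sub₀ (I_mul_cayley_ne_zero x), ← hsqrt]
  generalize 1 - 2 * I * (x : ℂ) = a at h h' ⊢
  field_simp

lemma cayley_tan_half (θ : ℝ) (hθ : Real.cos (θ / 2) ≠ 0) :
    cayley (Real.tan (θ / 2) / 2) = exp (θ * I) := by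
  have hc : (Real.cos (θ / 2) : ℂ) ≠ 0 := ofReal_ne_zero.mpr hθ
  have hexp (φ : ℝ) : exp (φ * I) = Real.cos φ + Real.sin φ * I := by
    rw [exp_mul_I, ← ofReal_cos, ← ofReal_sin]
  have hsub : 1 - 2 * I * ((Real.tan (θ / 2) / 2 : ℝ) : ℂ)
      = exp ((-(θ / 2) : ℝ) * I) / Real.cos (θ / 2) := by
    rw [Real.tan_eq_sin_div_cos, hexp, Real.cos_neg, Real.sin_neg]
    simp only [ofReal_div, ofReal_neg, ofReal_ofNat]
    field_simp
    ring
  have hadd : 1 + 2 * I * ((Real.tan (θ / 2) / 2 : ℝ) : ℂ)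
      = exp ((θ / 2 : ℝ) * I) / Real.cos (θ / 2) := by
    rw [Real.tan_eq_sin_div_cos, hexp]
    simp only [ofReal_div, ofReal_ofNat]
    field_simp
  rw [cayley, hsub, hadd, div_div_div_cancel_right₀ hc, ← exp_sub]
  congr 1
  push_cast
  ring

lemma θpt_mem_Ioo {N k : ℕ} (hk : k < 2 * N) : θpt N k ∈ Set.Ioo (-Real.pi) Real.pi := by
  have hN : (0 : ℝ) < N := by exact_mod_cast (show 0 < N by omega)
  have hk' : (k : ℝ) + 1 / 2 < 2 * N := by
    have : (k : ℝ) + 1 ≤ 2 * N := by exact_mod_cast hk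
    linarith
  constructor
  · have : 0 < ((k : ℝ) + 1 / 2) * Real.pi / N := by positivity
    rw [θpt]; linarith
  · have : ((k : ℝ) + 1 / 2) * Real.pi / N < 2 * Real.pi := by
      rw [div_lt_iff₀ hN]; nlinarith [Real.pi_pos]
    rw [θpt]; linarith

lemma cos_half_θpt_ne_zero {N k : ℕ} (hk : k < 2 * N) : Real.cos (θpt N k / 2) ≠ 0 := by
  obtain ⟨h₁, h₂⟩ := θpt_mem_Ioo hk
  exact (Real.cos_pos_of_mem_Ioo ⟨by linarith, by linarith⟩).ne'

lemma exp_θpt_mul_I (N k : ℕ) :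
    exp (θpt N k * I) = exp (θpt N 0 * I) * exp (2 * Real.pi * I / (2 * N : ℕ)) ^ k := by
  rw [← exp_nat_mul, ← exp_add, θpt, θpt]
  congr 1
  push_cast
  ring

theorem MT_discrete_orthonormal_general (N : ℕ) (l m : ℤ)
    (hl₁ : -(N : ℤ) ≤ l) (hl₂ : l ≤ (N : ℤ) - 1) (hm₁ : -(N : ℤ) ≤ m) (hm₂ : m ≤ (N : ℤ) - 1) :
    ((Real.pi / (4 * N) : ℝ) : ℂ) *
        ∑ k ∈ Finset.range (2 * N),
          MT l (xpt N k) * (starRingEnd ℂ) (MT m (xpt N k)) * ((1 + 4 * (xpt N k) ^ 2 : ℝ) : ℂ)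
      = if l = m then 1 else 0 := by
  have hζ := isPrimitiveRoot_exp (2 * N) (by omega)
  have hterm : ∀ k ∈ Finset.range (2 * N),
      MT l (xpt N k) * (starRingEnd ℂ) (MT m (xpt N k)) * ((1 + 4 * (xpt N k) ^ 2 : ℝ) : ℂ)
        = ((2 / Real.pi : ℝ) : ℂ) * (I * exp (θpt N 0 * I)) ^ (l - m)
          * (exp (2 * Real.pi * I / (2 * N : ℕ)) ^ k) ^ (l - m) := by
    intro k hk
    rw [xpt, MT_mul_conj_MT, cayley_tan_half _ (cos_half_θpt_ne_zero (Finset.mem_range.mp hk)),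
      exp_θpt_mul_I, ← mul_assoc, mul_zpow, ← mul_assoc]
  rw [Finset.sum_congr rfl hterm, ← Finset.mul_sum, hζ.sum_pow_zpow]
  by_cases hlm : l = m
  · have hN : (N : ℂ) ≠ 0 := Nat.cast_ne_zero.mpr (by omega)
    have hπ : (Real.pi : ℂ) ≠ 0 := ofReal_ne_zero.mpr Real.pi_ne_zero
    simp only [hlm, sub_self, zpow_zero, dvd_zero, if_true]
    push_cast
    field_simp
    ring
  · have hndvd : ¬ ((2 * N : ℕ) : ℤ) ∣ l - m := fun hdvd =>
      hlm (sub_eq_zero.mp (Int.eq_zero_of_abs_lt_dvd hdvd (by push_cast; rw [abs_lt]; omega)))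
    rw [if_neg hlm, if_neg hndvd, mul_zero, mul_zero]

theorem MT_discrete_orthonormal (N : ℕ) (hN : 1 ≤ N) (l m : ℤ)
    (hl₁ : -(N : ℤ) ≤ l) (hl₂ : l ≤ (N : ℤ) - 1) (hm₁ : -(N : ℤ) ≤ m) (hm₂ : m ≤ (N : ℤ) - 1) :
    ((Real.pi / (4 * N) : ℝ) : ℂ) *
        ∑ k ∈ Finset.range (2 * N),
          MT l (xpt N k) * (starRingEnd ℂ) (MT m (xpt N k)) * ((1 + 4 * (xpt N k) ^ 2 : ℝ) : ℂ)
      = if l = m then 1 else 0 :=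
  MT_discrete_orthonormal_general N l m hl₁ hl₂ hm₁ hm₂
end

section
/- For every n ≥ 0 and every real x, ∫_0^∞ L_n(ξ)·e^{−ξ/2 + ixξ} dξ = 2·(−1)^n·(1+2ix)^n/(1−2ix)^{n+1}, where L_n is the n-th (simple) Laguerre polynomial. -/
open Complex

/-- The simple Laguerre polynomial `L_n(ξ) = Σ_{ℓ=0}^n (-1)^ℓ C(n,ℓ) ξ^ℓ/ℓ!`. -/
noncomputable def laguerreFn (n : ℕ) (ξ : ℝ) : ℝ :=
  ∑ l ∈ Finset.range (n + 1), (-1) ^ l * (n.choose l : ℝ) * ξ ^ l / (Nat.factorial l : ℝ)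

/-!
Expanding `L_n` into monomials, the integral is a finite sum of moments
`∫₀^∞ ξ^l e^{-cξ} dξ = l! / c^{l+1}` with `c = 1/2 - ix`, `Re c > 0` (integration by parts in
`l`). The `l!` cancels against the `1/l!` of `L_n`, and the binomial theorem collapses the sum to
`(1 - 1/c)^n / c = (c - 1)^n / c^{n+1}`.
-/

open MeasureTheory Set Filter Topology
open scoped Nat

section Moments

variable {c : ℂ}

variable (c) in
theorem norm_ofReal_pow_mul_cexp_neg_mul (l : ℕ) {t : ℝ} (ht : 0 ≤ t) :
    ‖(t : ℂ) ^ l * cexp (-c * t)‖ = t ^ l * Real.exp (-c.re * t) := by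
  rw [norm_mul, norm_pow, norm_exp, norm_real, Real.norm_of_nonneg ht]
  simp

theorem integrableOn_ofReal_pow_mul_cexp_neg_mul (hc : 0 < c.re) (l : ℕ) :
    IntegrableOn (fun t : ℝ => (t : ℂ) ^ l * cexp (-c * t)) (Ioi 0) := by
  have hreal : IntegrableOn (fun t : ℝ => t ^ l * Real.exp (-c.re * t)) (Ioi 0) := by
    simpa only [Real.rpow_natCast, Real.rpow_one] using
      integrableOn_rpow_mul_exp_neg_mul_rpow (s := l) (by linarith [l.cast_nonneg (α := ℝ)])
        one_pos hc
  refine hreal.mono' (by fun_prop) ?_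
  filter_upwards [ae_restrict_mem measurableSet_Ioi] with t ht
  exact (norm_ofReal_pow_mul_cexp_neg_mul c l ht.le).le

theorem tendsto_ofReal_pow_mul_cexp_neg_mul_atTop (hc : 0 < c.re) (l : ℕ) :
    Tendsto (fun t : ℝ => (t : ℂ) ^ l * cexp (-c * t)) atTop (𝓝 0) := by
  have hreal : Tendsto (fun t : ℝ => t ^ l * Real.exp (-c.re * t)) atTop (𝓝 0) := by
    simpa only [Real.rpow_natCast] using tendsto_rpow_mul_exp_neg_mul_atTop_nhds_zero l c.re hc
  refine squeeze_zero_norm' ?_ hreal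
  filter_upwards [eventually_ge_atTop 0] with t ht
  exact (norm_ofReal_pow_mul_cexp_neg_mul c l ht).le

variable (c) in
theorem hasDerivAt_ofReal_pow_succ_mul_cexp_neg_mul (l : ℕ) (t : ℝ) :
    HasDerivAt (fun t : ℝ => (t : ℂ) ^ (l + 1) * cexp (-c * t))
      ((l + 1) * ((t : ℂ) ^ l * cexp (-c * t)) - c * ((t : ℂ) ^ (l + 1) * cexp (-c * t))) t := by
  have hpow : HasDerivAt (fun z : ℂ => z ^ (l + 1)) ((l + 1) * (t : ℂ) ^ l) t := by
    simpa using hasDerivAt_pow (l + 1) (t : ℂ)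
  have hexp : HasDerivAt (fun z : ℂ => cexp (-c * z)) (cexp (-c * t) * -c) t := by
    simpa using ((hasDerivAt_id (t : ℂ)).const_mul (-c)).cexp
  exact (hpow.mul hexp).comp_ofReal.congr_deriv (by ring)

theorem integral_cexp_neg_mul_Ioi_zero (hc : 0 < c.re) :
    ∫ t in Ioi (0 : ℝ), cexp (-c * t) = c⁻¹ := by
  rw [integral_exp_mul_complex_Ioi (by simpa using hc)]
  simp [neg_div]

theorem mul_integral_ofReal_pow_succ_mul_cexp_neg_mul (hc : 0 < c.re) (l : ℕ) :
    c * ∫ t in Ioi (0 : ℝ), (t : ℂ) ^ (l + 1) * cexp (-c * t)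
      = (l + 1) * ∫ t in Ioi (0 : ℝ), (t : ℂ) ^ l * cexp (-c * t) := by
  have hl := integrableOn_ofReal_pow_mul_cexp_neg_mul hc l
  have hl1 := integrableOn_ofReal_pow_mul_cexp_neg_mul hc (l + 1)
  have hparts := integral_Ioi_of_hasDerivAt_of_tendsto' (a := 0)
    (fun t _ => hasDerivAt_ofReal_pow_succ_mul_cexp_neg_mul c l t)
    ((hl.const_mul _).sub (hl1.const_mul _)) (tendsto_ofReal_pow_mul_cexp_neg_mul_atTop hc (l + 1))
  rw [integral_sub (hl.const_mul _) (hl1.const_mul _), integral_const_mul,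
    integral_const_mul] at hparts
  simp only [ofReal_zero, zero_pow l.succ_ne_zero, zero_mul, sub_zero] at hparts
  exact (sub_eq_zero.mp hparts).symm

theorem integral_ofReal_pow_mul_cexp_neg_mul (hc : 0 < c.re) (l : ℕ) :
    ∫ t in Ioi (0 : ℝ), (t : ℂ) ^ l * cexp (-c * t) = (l ! : ℂ) / c ^ (l + 1) := by
  have hc0 := ne_zero_of_re_pos hc
  induction l with
  | zero => simpa using integral_cexp_neg_mul_Ioi_zero hc
  | succ l ih =>
    have hrec := mul_integral_ofReal_pow_succ_mul_cexp_neg_mul hc l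
    rw [ih] at hrec
    rw [eq_div_iff (pow_ne_zero _ hc0), pow_succ', ← mul_assoc, mul_comm _ c, hrec,
      Nat.factorial_succ]
    field_simp
    push_cast
    ring

end Moments

theorem ofReal_laguerreFn_mul_cexp (n : ℕ) (ξ : ℝ) (z : ℂ) :
    (laguerreFn n ξ : ℂ) * z
      = ∑ l ∈ Finset.range (n + 1), (-1) ^ l * n.choose l / (l ! : ℂ) * ((ξ : ℂ) ^ l * z) := by
  rw [laguerreFn, ofReal_sum, Finset.sum_mul]
  refine Finset.sum_congr rfl fun l _ => ?_
  push_cast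
  ring

theorem integral_laguerreFn_mul_cexp_neg_mul {c : ℂ} (hc : 0 < c.re) (n : ℕ) :
    ∫ ξ in Ioi (0 : ℝ), (laguerreFn n ξ : ℂ) * cexp (-c * ξ) = (c - 1) ^ n / c ^ (n + 1) := by
  have hc0 := ne_zero_of_re_pos hc
  simp_rw [ofReal_laguerreFn_mul_cexp]
  rw [integral_finsetSum _ fun l _ => (integrableOn_ofReal_pow_mul_cexp_neg_mul hc l).const_mul _]
  simp_rw [integral_const_mul, integral_ofReal_pow_mul_cexp_neg_mul hc]
  have hterm : ∀ l ∈ Finset.range (n + 1), (-1) ^ l * n.choose l / (l ! : ℂ) * (l ! / c ^ (l + 1))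
      = (-c⁻¹) ^ l * 1 ^ (n - l) * n.choose l * c⁻¹ := by
    intro l _
    have hl : (l ! : ℂ) ≠ 0 := by exact_mod_cast l.factorial_ne_zero
    rw [neg_pow c⁻¹, inv_pow]
    field_simp
    ring
  rw [Finset.sum_congr rfl hterm, ← Finset.sum_mul, ← add_pow,
    show -c⁻¹ + 1 = (c - 1) / c by field_simp; ring, div_pow, pow_succ, div_mul_eq_div_div,
    div_eq_mul_inv _ c]

theorem laguerre_laplace (n : ℕ) (x : ℝ) :
    ∫ ξ in Set.Ioi (0 : ℝ), (laguerreFn n ξ : ℂ) * Complex.exp (-ξ / 2 + I * x * ξ)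
      = 2 * (-1) ^ n * (1 + 2 * I * x) ^ n / (1 - 2 * I * x) ^ (n + 1) := by
  have hc_re : 0 < ((1 - 2 * I * x) / 2).re := by simp
  have hc0 : 1 - 2 * I * x ≠ 0 := by simpa using ne_zero_of_re_pos hc_re
  have hexponent (ξ : ℝ) : -ξ / 2 + I * x * ξ = -((1 - 2 * I * x) / 2) * ξ := by ring
  simp_rw [hexponent, integral_laguerreFn_mul_cexp_neg_mul hc_re,
    show (1 - 2 * I * x) / 2 - 1 = -1 * (1 + 2 * I * x) / 2 by ring, div_pow, mul_pow]
  field_simp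
  ring
end

section
/- For f(x) = 1/(1+x²), the Malmquist–Takenaka coefficients satisfy ⟨f, φ_n⟩ = √(2π)·i^n·3^{−(n+1)} for n ≥ 0, where ⟨f, φ_n⟩ = ∫_{−∞}^∞ f(x)·conj(φ_n(x)) dx. -/
/-!
With the unimodular Blaschke factor `r x = (1 - 2ix) / (1 + 2ix)` and the splitting
`1 / (1 + x²) = (1 / (1 - ix) + 1 / (1 + ix)) / 2`, the integrand is a combination of the terms
`c a m x = r x ^ m / ((1 + aix) (1 + 2ix))` for `a = -1` and `a = 1`.
Since `r' = -4i / (1 + 2ix)²`, the term `c 2 m` is the derivative of a multiple of `r ^ (m + 1)`,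
which has the same limit `(-1) ^ (m + 1)` at `±∞`, so `∫ c 2 m = 0`. Writing `1 - 2ix` as a
combination of `1 + aix` and `1 + 2ix` expresses `c a (m + 1)` through `c 2 m` and `c a m`, so
`∫ c a m` is geometric with ratio `-(2 + a) / (2 - a)`. Its initial value comes from the even part
`c a 0 x + c a 0 (-x)`, a combination of two Cauchy densities: it is `2π/3` for `a = -1`
and `0` for `a = 1`.
-/

open Complex MeasureTheory

open Filter Topology Bornology

namespace MalmquistTakenaka

noncomputable def blaschke (x : ℝ) : ℂ := (1 - 2 * I * x) / (1 + 2 * I * x)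

noncomputable def cauchyTerm (a : ℝ) (m : ℕ) (x : ℝ) : ℂ :=
  blaschke x ^ m / ((1 + a * I * x) * (1 + 2 * I * x))

lemma one_add_mul_I_ne_zero (a x : ℝ) : (1 + a * I * x : ℂ) ≠ 0 := fun h => by
  simpa using congrArg re h

lemma one_add_two_mul_I_ne_zero (x : ℝ) : (1 + 2 * I * x : ℂ) ≠ 0 := by
  exact_mod_cast one_add_mul_I_ne_zero 2 x

lemma one_add_mul_I_mul_ne_zero (a x : ℝ) : ((1 + a * I * x) * (1 + 2 * I * x) : ℂ) ≠ 0 :=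
  mul_ne_zero (one_add_mul_I_ne_zero a x) (one_add_two_mul_I_ne_zero x)

lemma norm_sq_one_add_mul_I (a x : ℝ) : ‖(1 + a * I * x : ℂ)‖ ^ 2 = 1 + a ^ 2 * x ^ 2 := by
  rw [Complex.sq_norm, Complex.normSq_apply]
  simp only [add_re, one_re, mul_re, ofReal_re, I_re, mul_zero, ofReal_im, I_im, mul_one,
    sub_self, zero_mul, mul_im, add_zero, add_im, one_im, zero_add]
  ring

lemma norm_blaschke (x : ℝ) : ‖blaschke x‖ = 1 := by
  have h : (1 - 2 * I * x : ℂ) = (starRingEnd ℂ) (1 + 2 * I * x) := by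
    simp [map_ofNat, sub_eq_add_neg]
  rw [blaschke, norm_div, h, Complex.norm_conj,
    div_self (norm_ne_zero_iff.mpr (one_add_two_mul_I_ne_zero x))]

lemma continuous_blaschke : Continuous blaschke :=
  Continuous.div (by fun_prop) (by fun_prop) one_add_two_mul_I_ne_zero

lemma hasDerivAt_blaschke (x : ℝ) :
    HasDerivAt blaschke (-4 * I / (1 + 2 * I * x) ^ 2) x := by
  have hlin (c : ℂ) : HasDerivAt (fun y : ℝ => 1 + c * y) c x := by
    simpa using ((hasDerivAt_id x).ofReal_comp.const_mul c).const_add 1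
  have h := (hlin (-(2 * I))).div (hlin (2 * I)) (one_add_two_mul_I_ne_zero x)
  have e : blaschke = (fun y : ℝ => 1 + -(2 * I) * y) / fun y : ℝ => 1 + 2 * I * y := by
    funext y; simp [blaschke, sub_eq_add_neg]
  rw [e]
  exact h.congr_deriv (by ring)

lemma tendsto_blaschke_cobounded : Tendsto blaschke (cobounded ℝ) (𝓝 (-1)) := by
  have hw : Tendsto (fun x : ℝ => (1 + 2 * I * x : ℂ)) (cobounded ℝ) (cobounded ℂ) := by
    rw [← tendsto_norm_atTop_iff_cobounded]
    refine tendsto_atTop_mono (fun x => ?_)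
      (tendsto_norm_cobounded_atTop.const_mul_atTop two_pos)
    simpa [Real.norm_eq_abs] using Complex.abs_im_le_norm (1 + 2 * I * x)
  have h := ((tendsto_inv₀_cobounded.comp hw).const_mul 2).sub_const 1
  rw [mul_zero, zero_sub] at h
  refine h.congr fun x => ?_
  have := one_add_two_mul_I_ne_zero x
  simp only [Function.comp_apply, blaschke]
  field_simp
  ring

lemma min_one_abs_mul_le_norm (a x : ℝ) :
    min 1 |a| * (1 + x ^ 2) ≤ ‖(1 + a * I * x) * (1 + 2 * I * x)‖ := by
  have hk : 0 ≤ min 1 |a| := le_min zero_le_one (abs_nonneg a)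
  have hk1 : min 1 |a| ≤ 1 := min_le_left _ _
  have hka : min 1 |a| ^ 2 ≤ a ^ 2 := by
    rw [← sq_abs a]; exact pow_le_pow_left₀ hk (min_le_right _ _) 2
  have hW : ‖(1 + 2 * I * x : ℂ)‖ ^ 2 = 1 + 2 ^ 2 * x ^ 2 := by
    exact_mod_cast norm_sq_one_add_mul_I 2 x
  rw [← pow_le_pow_iff_left₀ (by positivity) (norm_nonneg _) two_ne_zero, norm_mul,
    mul_pow ‖(1 + a * I * x : ℂ)‖, norm_sq_one_add_mul_I, hW]
  calc (min 1 |a| * (1 + x ^ 2)) ^ 2 = (min 1 |a| ^ 2 * (1 + x ^ 2)) * (1 + x ^ 2) := by ring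
    _ ≤ (1 + a ^ 2 * x ^ 2) * (1 + 2 ^ 2 * x ^ 2) := by
      gcongr
      · nlinarith [sq_nonneg x]
      · nlinarith [sq_nonneg x]

lemma integrable_inv_mul_one_add_mul_I {a : ℝ} (ha : a ≠ 0) :
    Integrable fun x : ℝ => ((1 + a * I * x) * (1 + 2 * I * x))⁻¹ := by
  have hk : 0 < min 1 |a| := lt_min one_pos (abs_pos.mpr ha)
  refine (integrable_inv_one_add_sq.const_mul (min 1 |a|)⁻¹).mono' ?_ (ae_of_all _ fun x => ?_)
  · exact (Continuous.inv₀ (by fun_prop) (one_add_mul_I_mul_ne_zero a)).aestronglyMeasurable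
  · rw [norm_inv, ← mul_inv, inv_le_inv₀ (norm_pos_iff.mpr (one_add_mul_I_mul_ne_zero a x))
      (by positivity)]
    exact min_one_abs_mul_le_norm a x

lemma integrable_cauchyTerm {a : ℝ} (ha : a ≠ 0) (m : ℕ) : Integrable (cauchyTerm a m) := by
  unfold cauchyTerm
  simp_rw [div_eq_mul_inv]
  refine (integrable_inv_mul_one_add_mul_I ha).bdd_mul (c := 1) ?_ (ae_of_all _ fun x => ?_)
  · exact (continuous_blaschke.pow m).aestronglyMeasurable
  · rw [norm_pow, norm_blaschke, one_pow]

lemma integral_cauchyTerm_two (m : ℕ) : ∫ x, cauchyTerm 2 m x = 0 := by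
  set F : ℝ → ℂ := fun y => I / (4 * (m + 1)) * blaschke y ^ (m + 1)
  have hF (x : ℝ) : HasDerivAt F (cauchyTerm 2 m x) x := by
    refine (((hasDerivAt_blaschke x).fun_pow (m + 1)).const_mul _).congr_deriv ?_
    rw [Nat.add_sub_cancel, cauchyTerm]
    push_cast
    field_simp
    ring_nf
    rw [I_sq]
    ring
  have hlim := (tendsto_blaschke_cobounded.pow (m + 1)).const_mul (I / (4 * (m + 1)))
  simpa using integral_of_hasDerivAt_of_tendsto hF (integrable_cauchyTerm two_ne_zero m)
    (hlim.mono_left IsOrderBornology.atBot_le_cobounded)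
    (hlim.mono_left IsOrderBornology.atTop_le_cobounded)

lemma cauchyTerm_succ {a : ℝ} (ha : a ≠ 2) (m : ℕ) (x : ℝ) :
    cauchyTerm a (m + 1) x =
      4 / (2 - a) * cauchyTerm 2 m x - (2 + a) / (2 - a) * cauchyTerm a m x := by
  have h2a : (2 - a : ℂ) ≠ 0 := sub_ne_zero.mpr (by exact_mod_cast ha.symm)
  have hA := one_add_mul_I_ne_zero a x
  simp only [cauchyTerm, pow_succ]
  generalize blaschke x ^ m = p
  rw [blaschke]
  push_cast
  set A := (1 + a * I * x : ℂ)
  set W := (1 + 2 * I * x : ℂ)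
  have key : (2 - a) * (1 - 2 * I * x) = 4 * A - (2 + a) * W := by ring
  field_simp
  linear_combination p * key

lemma integral_inv_one_add_mul_sq (c : ℝ) :
    ∫ x : ℝ, (1 + (c * x) ^ 2)⁻¹ = |c⁻¹| * Real.pi := by
  rw [Measure.integral_comp_mul_left (fun y => (1 + y ^ 2)⁻¹) c, integral_univ_inv_one_add_sq,
    smul_eq_mul]

lemma cauchyTerm_zero_add_neg {a : ℝ} (ha : a ≠ 2) (x : ℝ) :
    cauchyTerm a 0 x + cauchyTerm a 0 (-x) =
      ((2 / (2 - a) * (2 * (1 + (2 * x) ^ 2)⁻¹ - a * (1 + (a * x) ^ 2)⁻¹) : ℝ) : ℂ) := by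
  have h2a : (2 - a : ℂ) ≠ 0 := sub_ne_zero.mpr (by exact_mod_cast ha.symm)
  have hA := one_add_mul_I_ne_zero a x
  have hA' : (1 + a * I * -x : ℂ) ≠ 0 := by exact_mod_cast one_add_mul_I_ne_zero a (-x)
  have hW := one_add_two_mul_I_ne_zero x
  have hW' : (1 + 2 * I * -x : ℂ) ≠ 0 := by exact_mod_cast one_add_mul_I_ne_zero 2 (-x)
  have hAA' : (1 + (a * x) ^ 2 : ℂ) = (1 + a * I * x) * (1 + a * I * -x) := by
    linear_combination (a * x : ℂ) ^ 2 * I_sq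
  have hWW' : (1 + (2 * x) ^ 2 : ℂ) = (1 + 2 * I * x) * (1 + 2 * I * -x) := by
    linear_combination (2 * x : ℂ) ^ 2 * I_sq
  simp only [cauchyTerm, pow_zero]
  push_cast
  rw [hAA', hWW']
  set A := (1 + a * I * x : ℂ)
  set A' := (1 + a * I * -x : ℂ)
  set W := (1 + 2 * I * x : ℂ)
  set W' := (1 + 2 * I * -x : ℂ)
  field_simp
  ring

lemma integral_cauchyTerm_zero {a : ℝ} (ha0 : a ≠ 0) (ha : a ≠ 2) :
    ∫ x, cauchyTerm a 0 x = ((Real.pi * (1 - a / |a|) / (2 - a) : ℝ) : ℂ) := by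
  have hq := integrable_cauchyTerm ha0 0
  have hc {c : ℝ} (hc : c ≠ 0) : Integrable fun x : ℝ => (1 + (c * x) ^ 2)⁻¹ :=
    integrable_inv_one_add_sq.comp_mul_left' hc
  refine mul_left_cancel₀ (two_ne_zero (α := ℂ)) ?_
  calc 2 * ∫ x, cauchyTerm a 0 x = (∫ x, cauchyTerm a 0 x) + ∫ x, cauchyTerm a 0 (-x) := by
        rw [integral_neg_eq_self]; ring
    _ = ∫ x, (cauchyTerm a 0 x + cauchyTerm a 0 (-x)) := (integral_add hq hq.comp_neg).symm
    _ = ∫ x : ℝ,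
          ((2 / (2 - a) * (2 * (1 + (2 * x) ^ 2)⁻¹ - a * (1 + (a * x) ^ 2)⁻¹) : ℝ) : ℂ) :=
        integral_congr_ae (ae_of_all _ (cauchyTerm_zero_add_neg ha))
    _ = 2 * ((Real.pi * (1 - a / |a|) / (2 - a) : ℝ) : ℂ) := by
        rw [integral_complex_ofReal, integral_const_mul,
          integral_sub ((hc two_ne_zero).const_mul 2) ((hc ha0).const_mul a),
          integral_const_mul, integral_const_mul,
          integral_inv_one_add_mul_sq, integral_inv_one_add_mul_sq, abs_inv, abs_inv]
        norm_num
        field_simp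

lemma integral_cauchyTerm {a : ℝ} (ha0 : a ≠ 0) (ha : a ≠ 2) (m : ℕ) :
    ∫ x, cauchyTerm a m x =
      (-(2 + a) / (2 - a) : ℂ) ^ m * ((Real.pi * (1 - a / |a|) / (2 - a) : ℝ) : ℂ) := by
  induction m with
  | zero => rw [pow_zero, one_mul, integral_cauchyTerm_zero ha0 ha]
  | succ m ih =>
    simp_rw [cauchyTerm_succ ha]
    rw [integral_sub ((integrable_cauchyTerm two_ne_zero m).const_mul _)
      ((integrable_cauchyTerm ha0 m).const_mul _), integral_const_mul, integral_const_mul,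
      integral_cauchyTerm_two, ih]
    ring

lemma conj_MT (n : ℕ) (x : ℝ) :
    starRingEnd ℂ (MT n x) =
      Real.sqrt (2 / Real.pi) * (-I) ^ n * blaschke x ^ n / (1 + 2 * I * x) := by
  simp only [MT, map_div₀, map_mul, map_zpow₀, map_add, map_sub, map_one, map_ofNat, conj_I,
    conj_ofReal]
  rw [show (n : ℤ) + 1 = ((n + 1 : ℕ) : ℤ) by push_cast; ring, zpow_natCast, zpow_natCast,
    zpow_natCast, blaschke, div_pow, pow_succ]
  field_simp
  ring

lemma inv_one_add_sq_mul_conj_MT (n : ℕ) (x : ℝ) :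
    1 / (1 + (x : ℂ) ^ 2) * starRingEnd ℂ (MT n x) =
      Real.sqrt (2 / Real.pi) * (-I) ^ n / 2 * (cauchyTerm (-1) n x + cauchyTerm 1 n x) := by
  have h1 : (1 + -1 * I * x : ℂ) ≠ 0 := by exact_mod_cast one_add_mul_I_ne_zero (-1) x
  have h2 : (1 + 1 * I * x : ℂ) ≠ 0 := by exact_mod_cast one_add_mul_I_ne_zero 1 x
  have hsq : (1 + (x : ℂ) ^ 2) = (1 + -1 * I * x) * (1 + 1 * I * x) := by
    linear_combination (x : ℂ) ^ 2 * I_sq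
  rw [conj_MT, cauchyTerm, cauchyTerm, hsq]
  push_cast
  set A := (1 + -1 * I * x : ℂ)
  set A' := (1 + 1 * I * x : ℂ)
  field_simp
  simp only [A, A']
  ring

lemma sqrt_two_div_pi_mul_pi : Real.sqrt (2 / Real.pi) * Real.pi = Real.sqrt (2 * Real.pi) := by
  rw [← Real.sqrt_sq Real.pi_pos.le, ← Real.sqrt_mul (by positivity),
    Real.sqrt_sq Real.pi_pos.le]
  congr 1
  field_simp

end MalmquistTakenaka

open MalmquistTakenaka in
theorem MT_coeff_of_cauchy (n : ℕ) :
    ∫ x : ℝ, (1 / (1 + (x : ℂ) ^ 2)) * (starRingEnd ℂ) (MT (n : ℤ) x)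
      = (Real.sqrt (2 * Real.pi) : ℂ) * I ^ n * (3 : ℂ)⁻¹ ^ (n + 1) := by
  simp_rw [inv_one_add_sq_mul_conj_MT]
  rw [integral_const_mul, integral_add (integrable_cauchyTerm (by norm_num) n)
    (integrable_cauchyTerm one_ne_zero n), integral_cauchyTerm (by norm_num) (by norm_num),
    integral_cauchyTerm one_ne_zero (by norm_num), ← sqrt_two_div_pi_mul_pi]
  push_cast
  generalize (Real.sqrt (2 / Real.pi) : ℂ) = c
  have hsign : (-1 : ℂ) ^ n * (-1) ^ n = 1 := by rw [← mul_pow]; norm_num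
  norm_num [neg_pow I, pow_succ]
  rw [neg_pow (1 / 3 : ℂ)]
  linear_combination c * I ^ n * Real.pi * (1 / 3) ^ n * (1 / 3) * hsign
end

section
/- Suppose H : ℝ → (−π, π) is differentiable, strictly increasing, surjective, and satisfies H''(x) = −a·H'(x)·sin(H(x)) for all x with a constant a ∈ ℝ, and additionally H'(x) = a·cos(H(x)) + b for some constant b. Then a = b and there exist real constants A ≠ 0 and B with H(x) = 2·arctan(A·x + B) for all x. -/
/-!
Passing to the limit `x → ∞` in the ODE, `H → π` forces `H' → a cos π + b = b - a`; a bounded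
function whose derivative has a limit can only have limit `0`, so `a = b`. The ODE then reads
`H' = a (1 + cos H)`, which the half-angle substitution `g = tan (H / 2)` linearises to `g' = a`.
Hence `g` is affine and `H = 2 arctan g`; the slope is nonzero because `H` is not constant.
-/

open Real Set Filter Topology

theorem le_zero_of_tendsto_deriv_of_bddAbove {f f' : ℝ → ℝ} {L : ℝ}
    (hf : ∀ x, HasDerivAt f (f' x) x) (hbdd : BddAbove (range f))
    (hL : Tendsto f' atTop (𝓝 L)) : L ≤ 0 := by
  by_contra! hL0
  obtain ⟨x₀, hx₀⟩ := eventually_atTop.1 (hL.eventually (lt_mem_nhds (half_lt_self hL0)))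
  obtain ⟨M, hM⟩ := hbdd
  have hgrowth : ∀ y ≥ x₀, L / 2 * (y - x₀) ≤ f y - f x₀ :=
    fun y hy ↦ (convex_Ici x₀).mul_sub_le_image_sub_of_le_deriv
      (fun x _ ↦ (hf x).continuousAt.continuousWithinAt)
      (fun x _ ↦ (hf x).differentiableAt.differentiableWithinAt)
      (fun x hx ↦ by
        rw [interior_Ici] at hx
        exact (hf x).deriv ▸ (hx₀ x hx.le).le)
      x₀ self_mem_Ici y hy hy
  have hgap : 0 < M - f x₀ + 1 := by linarith [hM (mem_range_self x₀)]
  set y := x₀ + 2 * (M - f x₀ + 1) / L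
  have hy : L / 2 * (y - x₀) = M - f x₀ + 1 := by
    simp only [y]; field_simp; ring
  have hx₀y : x₀ ≤ y := le_add_of_nonneg_right (by positivity)
  linarith [hgrowth y hx₀y, hM (mem_range_self y)]

theorem eq_zero_of_tendsto_deriv_of_bddAbove_of_bddBelow {f f' : ℝ → ℝ} {L : ℝ}
    (hf : ∀ x, HasDerivAt f (f' x) x) (hbddAbove : BddAbove (range f))
    (hbddBelow : BddBelow (range f)) (hL : Tendsto f' atTop (𝓝 L)) : L = 0 := by
  obtain ⟨m, hm⟩ := hbddBelow
  have hneg : BddAbove (range fun x ↦ -f x) :=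
    ⟨-m, by rintro _ ⟨x, rfl⟩; exact neg_le_neg (hm (mem_range_self x))⟩
  linarith [le_zero_of_tendsto_deriv_of_bddAbove hf hbddAbove hL,
    le_zero_of_tendsto_deriv_of_bddAbove (fun x ↦ (hf x).neg) hneg hL.neg]

theorem eq_mul_add_of_hasDerivAt_const {f : ℝ → ℝ} {c : ℝ} (hf : ∀ x, HasDerivAt f c x)
    (x : ℝ) : f x = c * x + f 0 := by
  have hsub : ∀ y, HasDerivAt (fun y ↦ f y - c * y) 0 y := fun y ↦ by
    simpa using (hf y).fun_sub ((hasDerivAt_id y).const_mul c)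
  have := is_const_of_deriv_eq_zero (fun y ↦ (hsub y).differentiableAt)
    (fun y ↦ (hsub y).deriv) x 0
  simp only [mul_zero, sub_zero] at this
  linarith

theorem cos_half_pos {θ : ℝ} (hθ : θ ∈ Ioo (-π) π) : 0 < cos (θ / 2) :=
  cos_pos_of_mem_Ioo ⟨by linarith [hθ.1], by linarith [hθ.2]⟩

theorem two_mul_arctan_tan_half {θ : ℝ} (hθ : θ ∈ Ioo (-π) π) : 2 * arctan (tan (θ / 2)) = θ := by
  rw [arctan_tan (by linarith [hθ.1]) (by linarith [hθ.2])]
  ring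

theorem one_add_cos_eq_two_mul_cos_half_sq (θ : ℝ) : 1 + cos θ = 2 * cos (θ / 2) ^ 2 := by
  rw [cos_sq]
  ring_nf

theorem one_add_cos_pos {θ : ℝ} (hθ : θ ∈ Ioo (-π) π) : 0 < 1 + cos θ := by
  rw [one_add_cos_eq_two_mul_cos_half_sq]
  exact mul_pos two_pos (pow_pos (cos_half_pos hθ) 2)

theorem HasDerivAt.tan_half {h : ℝ → ℝ} {h' x : ℝ} (hh : HasDerivAt h h' x)
    (hx : h x ∈ Ioo (-π) π) :
    HasDerivAt (fun y ↦ Real.tan (h y / 2)) (h' / (1 + Real.cos (h x))) x := by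
  refine ((hasDerivAt_tan (cos_half_pos hx).ne').comp x (hh.div_const 2)).congr_deriv ?_
  rw [one_add_cos_eq_two_mul_cos_half_sq]
  field_simp

theorem H_ode_characterisation_general (H : ℝ → ℝ) (a b : ℝ)
    (hmaps : ∀ x, H x ∈ Set.Ioo (-Real.pi) Real.pi)
    (hmono : StrictMono H)
    (hsurj : ∀ y ∈ Set.Ioo (-Real.pi) Real.pi, ∃ x, H x = y)
    (hderiv : ∀ x, HasDerivAt H (a * Real.cos (H x) + b) x) :
    a = b ∧ ∃ A B : ℝ, A ≠ 0 ∧ ∀ x, H x = 2 * Real.arctan (A * x + B) := by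
  have hrange : range H = Ioo (-π) π :=
    (range_subset_iff.2 hmaps).antisymm fun y hy ↦ hsurj y hy
  have hlim : Tendsto (fun x ↦ cos (H x)) atTop (𝓝 (-1)) :=
    cos_pi ▸ (continuous_cos.tendsto π).comp
      (tendsto_atTop_isLUB hmono.monotone (hrange ▸ isLUB_Ioo (by linarith [pi_pos])))
  have hab : a = b := by
    have hderiv_lim : Tendsto (fun x ↦ a * cos (H x) + b) atTop (𝓝 (b - a)) := by
      convert (hlim.const_mul a).add_const b using 2
      ring
    have := eq_zero_of_tendsto_deriv_of_bddAbove_of_bddBelow hderiv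
      (hrange ▸ bddAbove_Ioo) (hrange ▸ bddBelow_Ioo) hderiv_lim
    linarith
  subst hab
  have htan : ∀ x, HasDerivAt (fun y ↦ tan (H y / 2)) a x := fun x ↦
    ((hderiv x).tan_half (hmaps x)).congr_deriv <| by
      field_simp [(one_add_cos_pos (hmaps x)).ne']
      ring
  have hformula : ∀ x, H x = 2 * arctan (a * x + tan (H 0 / 2)) := fun x ↦ by
    rw [← eq_mul_add_of_hasDerivAt_const htan x, two_mul_arctan_tan_half (hmaps x)]
  refine ⟨rfl, a, _, fun ha ↦ hmono.injective.ne zero_ne_one ?_, hformula⟩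
  rw [hformula 0, hformula 1, ha]
  simp

theorem H_ode_characterisation (H : ℝ → ℝ) (a b : ℝ)
    (hmaps : ∀ x, H x ∈ Set.Ioo (-Real.pi) Real.pi)
    (hmono : StrictMono H)
    (hsurj : ∀ y ∈ Set.Ioo (-Real.pi) Real.pi, ∃ x, H x = y)
    (hderiv : ∀ x, HasDerivAt H (a * Real.cos (H x) + b) x)
    (hderiv2 : ∀ x, HasDerivAt (deriv H) (-a * deriv H x * Real.sin (H x)) x) :
    a = b ∧ ∃ A B : ℝ, A ≠ 0 ∧ ∀ x, H x = 2 * Real.arctan (A * x + B) :=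
  H_ode_characterisation_general H a b hmaps hmono hsurj hderiv
end

section
/- Let P = {p_n} be orthonormal polynomials satisfying the three-term recurrence ξ·p_n(ξ) = β_{n−1}p_{n−1}(ξ) + δ_n·p_n(ξ) + β_n·p_{n+1}(ξ) with β_n > 0, δ_n ∈ ℝ, and let g be an integrable function decaying superalgebraically. Define φ_n(x) = (e^{iθ_n}/√(2π))·∫ e^{ixξ}p_n(ξ)g(ξ) dξ for a sequence θ_n ∈ [0,2π). Then φ_n'(x) = −conj(b_{n−1})·φ_{n−1}(x) + i·c_n·φ_n(x) + b_n·φ_{n+1}(x), where b_n = i·e^{i(θ_n − θ_{n+1})}·β_n and c_n = δ_n. -/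
/-!
Differentiating under the integral sign (justified by the superalgebraic decay of `g`) turns
`d/dx e^{ixξ}` into `iξ e^{ixξ}`, so `φ_n'` is the transform of `iξ p_n(ξ) g(ξ)`. The three-term
recurrence rewrites `ξ p_n` as a combination of `p_{n-1}, p_n, p_{n+1}`, and the phases
`e^{iθ_n}` are absorbed into the coefficients `b_n`.
-/

open Complex MeasureTheory Polynomial

lemma integrable_ofReal_pow_mul {g : ℝ → ℂ} (hg : Integrable g)
    (hgdecay : ∀ k : ℕ, Integrable fun ξ : ℝ => ‖g ξ‖ * (1 + |ξ|) ^ k) (k : ℕ) :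
    Integrable fun ξ : ℝ => (ξ : ℂ) ^ k * g ξ := by
  refine (hgdecay k).mono' ((by fun_prop : Continuous fun ξ : ℝ => (ξ : ℂ) ^ k)
    |>.aestronglyMeasurable.mul hg.aestronglyMeasurable) (.of_forall fun ξ => ?_)
  rw [norm_mul, norm_pow, norm_real, Real.norm_eq_abs, mul_comm]
  gcongr
  linarith

lemma integrable_eval_mul {g : ℝ → ℂ} (hg : Integrable g)
    (hgdecay : ∀ k : ℕ, Integrable fun ξ : ℝ => ‖g ξ‖ * (1 + |ξ|) ^ k) (q : ℝ[X]) :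
    Integrable fun ξ : ℝ => ((q.eval ξ : ℝ) : ℂ) * g ξ := by
  induction q using Polynomial.induction_on' with
  | add q r hq hr =>
    simp only [eval_add, ofReal_add, add_mul]
    exact hq.add hr
  | monomial k a =>
    simpa only [eval_monomial, ofReal_mul, ofReal_pow, mul_assoc] using
      (integrable_ofReal_pow_mul hg hgdecay k).const_mul (a : ℂ)

lemma norm_cexp_I_mul_mul (x ξ : ℝ) : ‖cexp (I * x * ξ)‖ = 1 := by
  rw [mul_assoc, ← ofReal_mul, mul_comm, norm_exp_ofReal_mul_I]

lemma integrable_cexp_I_mul {h : ℝ → ℂ} (hh : Integrable h) (x : ℝ) :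
    Integrable fun ξ : ℝ => cexp (I * x * ξ) * h ξ :=
  hh.bdd_mul (c := 1) (by fun_prop : Continuous fun ξ : ℝ => cexp (I * x * ξ)).aestronglyMeasurable
    (.of_forall fun ξ => (norm_cexp_I_mul_mul x ξ).le)

theorem hasDerivAt_integral_cexp_I_mul {h : ℝ → ℂ} (hh : Integrable h)
    (hh' : Integrable fun ξ : ℝ => (ξ : ℂ) * h ξ) (x : ℝ) :
    HasDerivAt (fun y : ℝ => ∫ ξ : ℝ, cexp (I * y * ξ) * h ξ)
      (I * ∫ ξ : ℝ, cexp (I * x * ξ) * ((ξ : ℂ) * h ξ)) x := by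
  rw [← integral_const_mul]
  refine (hasDerivAt_integral_of_dominated_loc_of_deriv_le
    (F := fun (y ξ : ℝ) => cexp (I * y * ξ) * h ξ)
    (F' := fun (y ξ : ℝ) => I * (cexp (I * y * ξ) * ((ξ : ℂ) * h ξ)))
    (bound := fun ξ : ℝ => ‖(ξ : ℂ) * h ξ‖)
    Filter.univ_mem (.of_forall fun y => (integrable_cexp_I_mul hh y).aestronglyMeasurable)
    (integrable_cexp_I_mul hh x) ((integrable_cexp_I_mul hh' x).const_mul I).aestronglyMeasurable
    (.of_forall fun ξ y _ => ?_) hh'.norm (.of_forall fun ξ y _ => ?_)).2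
  · rw [norm_mul, norm_mul, norm_I, norm_cexp_I_mul_mul, one_mul, one_mul]
  · refine ((((hasDerivAt_id (y : ℂ)).const_mul I).mul_const (ξ : ℂ)).cexp.comp_ofReal.mul_const
      (h ξ)).congr_deriv ?_
    simp only [id, mul_one]
    ring

noncomputable def weightedFourier (g : ℝ → ℂ) (q : ℝ[X]) (x : ℝ) : ℂ :=
  ∫ ξ : ℝ, cexp (I * x * ξ) * ((q.eval ξ : ℝ) : ℂ) * g ξ

section weightedFourier

variable {g : ℝ → ℂ}

lemma weightedFourier_eq_integral (q : ℝ[X]) (x : ℝ) :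
    weightedFourier g q x = ∫ ξ : ℝ, cexp (I * x * ξ) * (((q.eval ξ : ℝ) : ℂ) * g ξ) := by
  simp only [weightedFourier, mul_assoc]

lemma weightedFourier_add (hg : Integrable g)
    (hgdecay : ∀ k : ℕ, Integrable fun ξ : ℝ => ‖g ξ‖ * (1 + |ξ|) ^ k) (q r : ℝ[X]) (x : ℝ) :
    weightedFourier g (q + r) x = weightedFourier g q x + weightedFourier g r x := by
  simp only [weightedFourier_eq_integral, eval_add, ofReal_add, add_mul, mul_add]
  exact integral_add (integrable_cexp_I_mul (integrable_eval_mul hg hgdecay q) x)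
    (integrable_cexp_I_mul (integrable_eval_mul hg hgdecay r) x)

lemma weightedFourier_C_mul (a : ℝ) (q : ℝ[X]) (x : ℝ) :
    weightedFourier g (C a * q) x = a * weightedFourier g q x := by
  simp only [weightedFourier_eq_integral, eval_mul, eval_C, ofReal_mul, ← integral_const_mul]
  congr 1 with ξ
  ring

lemma weightedFourier_zero (x : ℝ) : weightedFourier g 0 x = 0 := by
  simp [weightedFourier]

theorem hasDerivAt_weightedFourier (hg : Integrable g)
    (hgdecay : ∀ k : ℕ, Integrable fun ξ : ℝ => ‖g ξ‖ * (1 + |ξ|) ^ k) (q : ℝ[X]) (x : ℝ) :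
    HasDerivAt (weightedFourier g q) (I * weightedFourier g (X * q) x) x := by
  have hXq : ∀ ξ : ℝ, (((X * q).eval ξ : ℝ) : ℂ) * g ξ = (ξ : ℂ) * (((q.eval ξ : ℝ) : ℂ) * g ξ) :=
    fun ξ => by rw [eval_mul, eval_X, ofReal_mul, mul_assoc]
  rw [funext (weightedFourier_eq_integral (g := g) q), weightedFourier_eq_integral]
  simp_rw [hXq]
  refine hasDerivAt_integral_cexp_I_mul (integrable_eval_mul hg hgdecay q) ?_ x
  exact (integrable_eval_mul hg hgdecay (X * q)).congr (.of_forall hXq)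

end weightedFourier

lemma I_mul_cexp_I_mul_sub_mul_cexp (a b r : ℝ) :
    I * cexp (I * (a - b)) * r * cexp (I * b) = I * r * cexp (I * a) := by
  rw [mul_sub, Complex.exp_sub]
  field_simp

lemma neg_conj_I_mul_cexp_I_mul_sub_mul_cexp (a b r : ℝ) :
    -(starRingEnd ℂ) (I * cexp (I * (a - b)) * r) * cexp (I * a) = I * r * cexp (I * b) := by
  rw [map_mul, map_mul, conj_I, ← Complex.exp_conj, conj_ofReal, map_mul, conj_I, map_sub,
    conj_ofReal, conj_ofReal, ← I_mul_cexp_I_mul_sub_mul_cexp b a r]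
  ring_nf

theorem fourier_weighted_OP_hasDerivAt_general
    (p : ℕ → Polynomial ℝ) (β δ : ℕ → ℝ) (θ : ℕ → ℝ)
    (hrec : ∀ n : ℕ, Polynomial.X * p n =
      (if n = 0 then 0 else Polynomial.C (β (n - 1)) * p (n - 1)) +
        Polynomial.C (δ n) * p n + Polynomial.C (β n) * p (n + 1))
    (g : ℝ → ℂ) (hg : Integrable g)
    (hgdecay : ∀ k : ℕ, Integrable (fun ξ : ℝ => ‖g ξ‖ * (1 + |ξ|) ^ k))
    (φ : ℕ → ℝ → ℂ)
    (hφ : ∀ n x, φ n x = Complex.exp (I * θ n) / (Real.sqrt (2 * Real.pi) : ℂ) *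
      ∫ ξ : ℝ, Complex.exp (I * x * ξ) * (((p n).eval ξ : ℝ) : ℂ) * g ξ)
    (b : ℕ → ℂ) (hb : ∀ n, b n = I * Complex.exp (I * (θ n - θ (n + 1))) * β n)
    (c : ℕ → ℝ) (hc : ∀ n, c n = δ n) :
    ∀ (n : ℕ) (x : ℝ), HasDerivAt (φ n)
      ((if n = 0 then 0 else -(starRingEnd ℂ) (b (n - 1)) * φ (n - 1) x) +
        I * c n * φ n x + b n * φ (n + 1) x) x := by
  intro n x
  have hφ' : ∀ m y, φ m y = cexp (I * θ m) / (Real.sqrt (2 * Real.pi) : ℂ) *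
      weightedFourier g (p m) y := hφ
  have hb_shift : ∀ m, b m * cexp (I * θ (m + 1)) = I * β m * cexp (I * θ m) := fun m => by
    rw [hb]; exact I_mul_cexp_I_mul_sub_mul_cexp _ _ _
  have hb_conj : ∀ m, -(starRingEnd ℂ) (b m) * cexp (I * θ m) = I * β m * cexp (I * θ (m + 1)) :=
    fun m => by rw [hb]; exact neg_conj_I_mul_cexp_I_mul_sub_mul_cexp _ _ _
  have hderiv := (hasDerivAt_weightedFourier hg hgdecay (p n) x).const_mul
    (cexp (I * θ n) / (Real.sqrt (2 * Real.pi) : ℂ))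
  rw [hrec n, weightedFourier_add hg hgdecay, weightedFourier_add hg hgdecay,
    weightedFourier_C_mul, weightedFourier_C_mul, apply_ite (weightedFourier g · x),
    weightedFourier_zero, weightedFourier_C_mul] at hderiv
  rw [funext (hφ' n)]
  refine hderiv.congr_deriv ?_
  simp only [hφ', hc]
  rcases n with _ | n
  · simp only [↓reduceIte]
    linear_combination (-weightedFourier g (p 1) x / (Real.sqrt (2 * Real.pi) : ℂ)) * hb_shift 0
  · simp only [Nat.add_one_ne_zero, ↓reduceIte, Nat.add_sub_cancel]
    linear_combination (-weightedFourier g (p (n + 2)) x / (Real.sqrt (2 * Real.pi) : ℂ)) *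
      hb_shift (n + 1) - (weightedFourier g (p n) x / (Real.sqrt (2 * Real.pi) : ℂ)) * hb_conj n

theorem fourier_weighted_OP_hasDerivAt
    (p : ℕ → Polynomial ℝ) (β δ : ℕ → ℝ) (θ : ℕ → ℝ)
    (hdeg : ∀ n, (p n).natDegree = n)
    (hβ : ∀ n, 0 < β n)
    (hθ : ∀ n, θ n ∈ Set.Ico (0 : ℝ) (2 * Real.pi))
    (hrec : ∀ n : ℕ, Polynomial.X * p n =
      (if n = 0 then 0 else Polynomial.C (β (n - 1)) * p (n - 1)) +
        Polynomial.C (δ n) * p n + Polynomial.C (β n) * p (n + 1))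
    (g : ℝ → ℂ) (hg : Integrable g)
    (hgdecay : ∀ k : ℕ, Integrable (fun ξ : ℝ => ‖g ξ‖ * (1 + |ξ|) ^ k))
    (φ : ℕ → ℝ → ℂ)
    (hφ : ∀ n x, φ n x = Complex.exp (I * θ n) / (Real.sqrt (2 * Real.pi) : ℂ) *
      ∫ ξ : ℝ, Complex.exp (I * x * ξ) * (((p n).eval ξ : ℝ) : ℂ) * g ξ)
    (b : ℕ → ℂ) (hb : ∀ n, b n = I * Complex.exp (I * (θ n - θ (n + 1))) * β n)
    (c : ℕ → ℝ) (hc : ∀ n, c n = δ n) :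
    ∀ (n : ℕ) (x : ℝ), HasDerivAt (φ n)
      ((if n = 0 then 0 else -(starRingEnd ℂ) (b (n - 1)) * φ (n - 1) x) +
        I * c n * φ n x + b n * φ (n + 1) x) x :=
  fourier_weighted_OP_hasDerivAt_general p β δ θ hrec g hg hgdecay φ hφ b hb c hc
end

section
/- Let Φ = {φ_n}_{n≥0} satisfy φ_n'(x) = −conj(b_{n−1})·φ_{n−1}(x) + i·c_n·φ_n(x) + b_n·φ_{n+1}(x) with b_n ∈ ℂ \ {0}, c_n ∈ ℝ, b_{−1} = 0, and all φ_n smooth. Then φ_n(x) = (b_0·b_1⋯b_{n−1})^{−1}·Σ_{ℓ=0}^n β_{n,ℓ}·φ_0^{(ℓ)}(x), where β_{0,0} = β_{1,1} = 1, β_{1,0} = −i·c_0, and for n ≥ 1: β_{n+1,0} = |b_{n−1}|²·β_{n−1,0} − i·c_n·β_{n,0} and β_{n+1,ℓ} = β_{n,ℓ−1} + |b_{n−1}|²·β_{n−1,ℓ} − i·c_n·β_{n,ℓ} for 1 ≤ ℓ ≤ n+1 (with β_{n,ℓ} = 0 for ℓ > n or ℓ < 0). -/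
open Complex

theorem phi_n_as_combination_of_derivs
    (φ : ℕ → ℝ → ℂ) (hsmooth : ∀ n, ContDiff ℝ (⊤ : ℕ∞) (φ n))
    (b : ℕ → ℝ) (hb : ∀ n, 0 < b n) (c : ℕ → ℝ)
    (hderiv : ∀ (n : ℕ) (x : ℝ), HasDerivAt (φ n)
      ((if n = 0 then 0 else -(b (n - 1) : ℂ) * φ (n - 1) x) +
        I * c n * φ n x + (b n : ℂ) * φ (n + 1) x) x)
    (β : ℕ → ℕ → ℂ)
    (hβ00 : β 0 0 = 1) (hβ11 : β 1 1 = 1) (hβ10 : β 1 0 = -I * c 0)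
    (hβzero : ∀ n l, n < l → β n l = 0)
    (hβrec0 : ∀ n : ℕ, 1 ≤ n →
      β (n + 1) 0 = (b (n - 1) : ℂ) ^ 2 * β (n - 1) 0 - I * c n * β n 0)
    (hβrec : ∀ n : ℕ, 1 ≤ n → ∀ l : ℕ, 1 ≤ l → l ≤ n + 1 →
      β (n + 1) l = β n (l - 1) + (b (n - 1) : ℂ) ^ 2 * β (n - 1) l - I * c n * β n l) :
    ∀ (n : ℕ) (x : ℝ), φ n x =
      (∏ k ∈ Finset.range n, (b k : ℂ))⁻¹ *
        ∑ l ∈ Finset.range (n + 1), β n l * iteratedDeriv l (φ 0) x := by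
  -- abbreviations
  set P : ℕ → ℂ := fun n => ∏ k ∈ Finset.range n, (b k : ℂ) with hPdef
  have hP : ∀ n, P n ≠ 0 := by
    intro n
    refine Finset.prod_ne_zero_iff.2 fun k _ => ?_
    exact_mod_cast (hb k).ne'
  -- derivative of iterated derivatives of φ 0
  have hD : ∀ (l : ℕ) (x : ℝ),
      HasDerivAt (iteratedDeriv l (φ 0)) (iteratedDeriv (l + 1) (φ 0) x) x := by
    intro l x
    have hdiff : Differentiable ℝ (iteratedDeriv l (φ 0)) :=
      (hsmooth 0).differentiable_iteratedDeriv l (by exact_mod_cast lt_top_iff_ne_top.2 (by simp))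
    rw [iteratedDeriv_succ]
    exact (hdiff x).hasDerivAt
  -- the key sum identity from the recurrences
  have sumkey : ∀ (m : ℕ), 1 ≤ m → ∀ (D : ℕ → ℂ),
      ∑ l ∈ Finset.range (m + 2), β (m + 1) l * D l =
        (∑ l ∈ Finset.range (m + 1), β m l * D (l + 1)) +
          (b (m - 1) : ℂ) ^ 2 * (∑ l ∈ Finset.range m, β (m - 1) l * D l) -
          I * c m * (∑ l ∈ Finset.range (m + 1), β m l * D l) := by
    intro m hm D
    have h1 : (∑ l ∈ Finset.range (m + 2), β (m - 1) l * D l) =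
        ∑ l ∈ Finset.range m, β (m - 1) l * D l := by
      rw [Finset.sum_range_succ, Finset.sum_range_succ,
        hβzero (m - 1) m (by omega), hβzero (m - 1) (m + 1) (by omega)]
      ring
    have h2 : (∑ l ∈ Finset.range (m + 2), β m l * D l) =
        ∑ l ∈ Finset.range (m + 1), β m l * D l := by
      rw [Finset.sum_range_succ, hβzero m (m + 1) (by omega)]
      ring
    have key : ∀ l ∈ Finset.range (m + 1), β (m + 1) (l + 1) * D (l + 1) =
        β m l * D (l + 1) + (b (m - 1) : ℂ) ^ 2 * (β (m - 1) (l + 1) * D (l + 1)) -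
          I * c m * (β m (l + 1) * D (l + 1)) := by
      intro l hl
      rw [Finset.mem_range] at hl
      rw [hβrec m hm (l + 1) (by omega) (by omega)]
      simp only [Nat.add_sub_cancel]
      ring
    rw [← h1, ← h2, Finset.sum_range_succ' (fun l => β (m + 1) l * D l) (m + 1),
      Finset.sum_range_succ' (fun l => β (m - 1) l * D l) (m + 1),
      Finset.sum_range_succ' (fun l => β m l * D l) (m + 1),
      Finset.sum_congr rfl key, Finset.sum_sub_distrib, Finset.sum_add_distrib,
      ← Finset.mul_sum, ← Finset.mul_sum, hβrec0 m hm]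
    ring
  -- the main induction: the product-cleared statement
  have T : ∀ (n : ℕ) (x : ℝ), P n * φ n x =
      ∑ l ∈ Finset.range (n + 1), β n l * iteratedDeriv l (φ 0) x := by
    have T0 : ∀ x : ℝ, P 0 * φ 0 x =
        ∑ l ∈ Finset.range 1, β 0 l * iteratedDeriv l (φ 0) x := by
      intro x
      simp [hPdef, hβ00]
    have T1 : ∀ x : ℝ, P 1 * φ 1 x =
        ∑ l ∈ Finset.range 2, β 1 l * iteratedDeriv l (φ 0) x := by
      intro x
      have h0 := hderiv 0 x
      rw [if_pos rfl, zero_add] at h0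
      have hd0 : deriv (φ 0) x = I * c 0 * φ 0 x + (b 0 : ℂ) * φ 1 x := h0.deriv
      simp only [Finset.sum_range_succ, Finset.sum_range_zero, zero_add, hβ10, hβ11,
        iteratedDeriv_zero, iteratedDeriv_one, hd0, hPdef, Finset.prod_range_one]
      ring
    have step : ∀ n : ℕ, (∀ x, P n * φ n x =
          ∑ l ∈ Finset.range (n + 1), β n l * iteratedDeriv l (φ 0) x) →
        (∀ x, P (n + 1) * φ (n + 1) x =
          ∑ l ∈ Finset.range (n + 2), β (n + 1) l * iteratedDeriv l (φ 0) x) →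
        ∀ x, P (n + 2) * φ (n + 2) x =
          ∑ l ∈ Finset.range (n + 3), β (n + 2) l * iteratedDeriv l (φ 0) x := by
      intro n ihn ihm x
      set m := n + 1 with hmdef
      -- derivative of the sum
      have hS : HasDerivAt (fun y => ∑ l ∈ Finset.range (m + 1),
            β m l * iteratedDeriv l (φ 0) y)
          (∑ l ∈ Finset.range (m + 1), β m l * iteratedDeriv (l + 1) (φ 0) x) x :=
        HasDerivAt.fun_sum fun l _ => (hD l x).const_mul _
      have hfun : (fun y => P m * φ m y) = fun y => ∑ l ∈ Finset.range (m + 1),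
          β m l * iteratedDeriv l (φ 0) y := funext fun y => ihm y
      have hφm : HasDerivAt (fun y => P m * φ m y)
          (P m * ((if m = 0 then 0 else -(b (m - 1) : ℂ) * φ (m - 1) x) +
            I * c m * φ m x + (b m : ℂ) * φ (m + 1) x)) x := (hderiv m x).const_mul _
      rw [hfun] at hφm
      have huniq := hφm.unique hS
      simp only [hmdef, Nat.add_sub_cancel, if_neg (Nat.succ_ne_zero n)] at huniq
      -- now algebra
      rw [sumkey m (by omega) (fun l => iteratedDeriv l (φ 0) x)]
      simp only [hmdef, Nat.add_sub_cancel]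
      rw [← ihn x, ← ihm x, ← huniq]
      have hPm1 : P (n + 1) = P n * (b n : ℂ) := Finset.prod_range_succ _ _
      have hPm2 : P (n + 2) = P (n + 1) * (b (n + 1) : ℂ) := Finset.prod_range_succ _ _
      rw [hPm2, hPm1]
      ring
    have main : ∀ n : ℕ, (∀ x, P n * φ n x =
        ∑ l ∈ Finset.range (n + 1), β n l * iteratedDeriv l (φ 0) x) ∧
        (∀ x, P (n + 1) * φ (n + 1) x =
        ∑ l ∈ Finset.range (n + 2), β (n + 1) l * iteratedDeriv l (φ 0) x) := by
      intro n
      induction n with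
      | zero => exact ⟨T0, T1⟩
      | succ n ih => exact ⟨ih.2, step n ih.1 ih.2⟩
    exact fun n => (main n).1
  intro n x
  rw [eq_inv_mul_iff_mul_eq₀ (hP n)]
  exact T n x
end
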